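/- Let 𝔽 be a field in which 2 ≠ 0, let E and N be finite sets, s, t : E → N, let Z : E → 𝔽 satisfy Z(e) ≠ 0 for all e, let ∂N ⊆ N, and let P : (N → 𝔽) → 𝔽 be the extended power functional P(φ) = (1/2)·∑_{e ∈ E} Z(e)⁻¹·(φ(t(e)) − φ(s(e)))². Then a potential φ : N → 𝔽 satisfies dP_φ(δ_n) = 0 for every nonterminal node n ∈ N∖∂N if and only if the induced current I(e) = Z(e)⁻¹·(φ(t(e)) − φ(s(e))) obeys Kirchhoff's current law: ∑_{e : s(e)=n} I(e) = ∑_{e : t(e)=n} I(e) for all n ∈ N∖∂N. -/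
import Mathlib


open Finset

/-- The extended power functional of a circuit over a field, with impedances `Z`. -/
noncomputable def extPowerF {F E N : Type*} [Field F] [Fintype E]
    (s t : E → N) (Z : E → F) (φ : N → F) : F :=
  (1 / 2 : F) * ∑ e, (Z e)⁻¹ * (φ (t e) - φ (s e)) ^ 2

/-- The formal derivative `df_φ(χ) = f(φ + χ) - f(φ) - f(χ)`. -/
def formalDeriv {F S : Type*} [Field F] (f : (S → F) → F) (φ χ : S → F) : F :=
  f (φ + χ) - f φ - f χ

/-- The indicator function `δ_n` of a point `n`. -/
def delta {F S : Type*} [Field F] [DecidableEq S] (n : S) : S → F :=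
  fun m => if m = n then 1 else 0

lemma fd_key {F : Type*} [Field F] (h2 : (2 : F) ≠ 0)
    {E N : Type*} [Fintype E] [DecidableEq N]
    (s t : E → N) (Z : E → F) (φ : N → F) (n : N) :
    formalDeriv (extPowerF s t Z) φ (delta n) =
      (∑ e ∈ univ.filter (fun e => t e = n), (Z e)⁻¹ * (φ (t e) - φ (s e))) -
      (∑ e ∈ univ.filter (fun e => s e = n), (Z e)⁻¹ * (φ (t e) - φ (s e))) := by
  simp only [formalDeriv, extPowerF, Pi.add_apply]
  rw [← mul_sub, ← mul_sub, ← Finset.sum_sub_distrib, ← Finset.sum_sub_distrib]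
  rw [Finset.sum_filter, Finset.sum_filter, ← Finset.sum_sub_distrib, Finset.mul_sum]
  apply Finset.sum_congr rfl
  intro e _
  simp only [delta]
  by_cases h1 : t e = n <;> by_cases h2' : s e = n <;> simp [h1, h2'] <;> field_simp <;> ring

/-- Over a field in which `2 ≠ 0`, a potential `φ` is realizable (the
formal derivative of the extended power functional vanishes in the direction `δ_n` for
every nonterminal node `n`) if and only if the induced current
`I(e) = Z(e)⁻¹·(φ(t e) - φ(s e))` obeys Kirchhoff's current law at every nonterminal
node. -/
theorem statement8 {F : Type*} [Field F] (h2 : (2 : F) ≠ 0)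
    {E N : Type*} [Fintype E] [Fintype N] [DecidableEq N]
    (s t : E → N) (Z : E → F) (hZ : ∀ e, Z e ≠ 0) (B : Finset N) (φ : N → F) :
    (∀ n ∉ B, formalDeriv (extPowerF s t Z) φ (delta n) = 0) ↔
      ∀ n ∉ B,
        ∑ e ∈ univ.filter (fun e => s e = n), (Z e)⁻¹ * (φ (t e) - φ (s e)) =
          ∑ e ∈ univ.filter (fun e => t e = n), (Z e)⁻¹ * (φ (t e) - φ (s e)) := by
  constructor <;> intro h n hn <;> have := h n hn
  · rw [fd_key h2] at this
    exact (sub_eq_zero.mp this).symm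
  · rw [fd_key h2, this, sub_self]
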